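/- arXiv:2402.03958 — 2 statements merged into one kernel-verified Lean document; each statement's English description precedes it below -/
import Mathlib

section
/- (Theorem 3(b)) Assume B is bounded and strictly positive, Hypothesis 2.1 holds, and Φ''(x) ≤ 0 for x ∈ (0,1). If R₀ < 1, then the disease-free equilibrium X₀* = (S*, 0, 0, 0) of system (4) attracts every solution with initial condition in Ω = {(S,E,I,R) ∈ ℝ⁴₊ : S > 0}: along any such solution, S(t) → S*, E(t) → 0, I(t) → 0 and R(t) → 0 as t → ∞. -/
/-!
Concavity gives `Φ x ≤ Φ'(0) x`, so `(E, I)` is dominated by the nonnegative linear system with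
matrix `[[σE (1 - γE), σE Φ'(0)], [σI γE, σI (1 - γI)]]`. The condition `R₀ < 1` says that this
matrix has spectral radius below `1`, so a positive left sub-eigenvector `(w, 1)` makes `w E + I`
decay geometrically; then `R → 0` as well. The population stays bounded, so from time `1` on `S`
lives in a compact interval `[b, C] ⊂ (0, ∞)` mapped into itself by `Σ(S) = B(S) + σS S`, and it
is an asymptotic pseudo-orbit of `Σ`. A cluster point of `S` is carried by `Σ` into the region
where `|Σ'(S*)| < 1` makes `Σ` a contraction towards `S*`; shadowing those finitely many steps
brings `S` into that region, and the contraction keeps it there.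
-/

open Filter Set Topology Metric

theorem tendsto_zero_of_le_mul_add {q : ℝ} (hq₀ : 0 ≤ q) (hq₁ : q < 1) {x u : ℕ → ℝ}
    (hx : ∀ t, 0 ≤ x t) (hxu : ∀ t, x (t + 1) ≤ q * x t + u t)
    (hu : Tendsto u atTop (𝓝 0)) : Tendsto x atTop (𝓝 0) := by
  refine tendsto_order.2 ⟨fun a ha => .of_forall fun t => ha.trans_le (hx t), fun ε hε => ?_⟩
  obtain ⟨T, hT⟩ := eventually_atTop.1
    ((tendsto_order.1 hu).2 ((1 - q) * (ε / 2)) (by nlinarith))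
  have hbound : ∀ k, x (T + k) ≤ q ^ k * x T + ε / 2 := by
    intro k
    induction k with
    | zero => simp only [add_zero, pow_zero, one_mul]; linarith
    | succ k ih =>
      calc x (T + (k + 1)) ≤ q * x (T + k) + u (T + k) := hxu (T + k)
        _ ≤ q * (q ^ k * x T + ε / 2) + (1 - q) * (ε / 2) := by
          gcongr
          exact (hT _ le_self_add).le
        _ = q ^ (k + 1) * x T + ε / 2 := by ring
  have hgeom : Tendsto (fun k => q ^ k * x T + ε / 2) atTop (𝓝 (ε / 2)) := by
    simpa using ((tendsto_pow_atTop_nhds_zero_of_lt_one hq₀ hq₁).mul_const (x T)).add_const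
      (ε / 2)
  obtain ⟨K, hK⟩ := eventually_atTop.1 ((tendsto_order.1 hgeom).2 ε (by linarith))
  refine eventually_atTop.2 ⟨T + K, fun t ht => ?_⟩
  obtain ⟨k, rfl⟩ := Nat.exists_eq_add_of_le (le_of_add_le_left ht)
  exact (hbound k).trans_lt (hK k (by omega))

theorem le_max_div_of_le_add_mul {q b : ℝ} (hq₀ : 0 ≤ q) (hq₁ : q < 1) {x : ℕ → ℝ}
    (hx : ∀ t, x (t + 1) ≤ b + q * x t) (t : ℕ) : x t ≤ max (x 0) (b / (1 - q)) := by
  have hb : b + q * max (x 0) (b / (1 - q)) ≤ max (x 0) (b / (1 - q)) := by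
    have := (div_le_iff₀ (sub_pos.2 hq₁)).1 (le_max_right (x 0) (b / (1 - q)))
    linarith
  induction t with
  | zero => exact le_max_left _ _
  | succ t ih => exact (hx t).trans (by nlinarith)

theorem tendsto_zero_of_le_linear_pair {a b c d : ℝ} (ha : a < 1) (hd : d < 1) (hc : 0 < c)
    (hbc : b * c < (1 - a) * (1 - d)) {x y : ℕ → ℝ} (hx : ∀ t, 0 ≤ x t) (hy : ∀ t, 0 ≤ y t)
    (hxs : ∀ t, x (t + 1) ≤ a * x t + b * y t) (hys : ∀ t, y (t + 1) ≤ c * x t + d * y t) :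
    Tendsto x atTop (𝓝 0) ∧ Tendsto y atTop (𝓝 0) := by
  have hid : Tendsto id (𝓝[<] (1 : ℝ)) (𝓝 1) := tendsto_id'.2 nhdsWithin_le_nhds
  obtain ⟨θ, hθbc, hθa, hθd, hθ₀, hθ₁⟩ :=
    (((hid.sub_const a).mul (hid.sub_const d)).eventually_const_lt hbc |>.and <|
      (hid.eventually_const_lt ha).and <| (hid.eventually_const_lt hd).and <|
      (hid.eventually_const_lt one_pos).and self_mem_nhdsWithin).exists
  dsimp only [id] at hθbc hθa hθd hθ₀
  have hθa' : 0 < θ - a := sub_pos.2 hθa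
  -- `w x + y` is a Lyapunov function: `(w, 1)` is a left sub-eigenvector for the eigenvalue `θ`
  set w := c / (θ - a)
  have hw : 0 < w := div_pos hc hθa'
  have hwx : w * a + c = θ * w := by simp only [w]; field_simp; ring
  have hwy : w * b + d ≤ θ := by
    have : w * b ≤ θ - d := by
      rw [div_mul_eq_mul_div, div_le_iff₀ hθa']
      linarith
    linarith
  have hV : Tendsto (fun t => w * x t + y t) atTop (𝓝 0) := by
    refine tendsto_zero_of_le_mul_add hθ₀.le hθ₁ (fun t => by nlinarith [hx t, hy t])
      (fun t => ?_) tendsto_const_nhds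
    have hwxs := mul_le_mul_of_nonneg_left (hxs t) hw.le
    have hwys := mul_le_mul_of_nonneg_right hwy (hy t)
    linear_combination hwxs + hwys + hys t + x t * hwx
  constructor
  · refine squeeze_zero hx (fun t => ?_) (by simpa using hV.div_const w)
    rw [le_div_iff₀ hw]
    nlinarith [hy t]
  · exact squeeze_zero hy (fun t => by nlinarith [hx t]) hV

theorem concaveOn_Icc_of_iteratedDerivWithin_two_nonpos {f : ℝ → ℝ} {a b : ℝ} (hab : a < b)
    (hf : ContDiffOn ℝ 2 f (Icc a b))
    (hf'' : ∀ x ∈ Ioo a b, iteratedDerivWithin 2 f (Icc a b) x ≤ 0) :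
    ConcaveOn ℝ (Icc a b) f := by
  have hfo : ContDiffOn ℝ 2 f (Ioo a b) := hf.mono Ioo_subset_Icc_self
  refine concaveOn_of_deriv2_nonpos (convex_Icc a b) hf.continuousOn ?_ ?_ ?_ <;>
    rw [interior_Icc]
  · exact hfo.differentiableOn (by norm_num)
  · exact (hfo.deriv_of_isOpen isOpen_Ioo (m := 1) (by norm_num)).differentiableOn (by norm_num)
  · intro x hx
    rw [← iteratedDeriv_eq_iterate, ← iteratedDerivWithin_eq_iteratedDeriv (uniqueDiffOn_Icc hab)
      (hf.contDiffAt (Icc_mem_nhds hx.1 hx.2)) (Ioo_subset_Icc_self hx)]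
    exact hf'' x hx

theorem ConcaveOn.le_add_derivWithin_mul {f : ℝ → ℝ} {s : Set ℝ} {a x : ℝ}
    (hf : ConcaveOn ℝ s f) (ha : a ∈ s) (hx : x ∈ s) (hax : a ≤ x)
    (hfa : DifferentiableWithinAt ℝ f s a) : f x ≤ f a + derivWithin f s a * (x - a) := by
  rcases hax.eq_or_lt with rfl | hax
  · simp
  · have h := hf.slope_le_derivWithin ha hx hax hfa
    rw [slope_def_field, div_le_iff₀ (sub_pos.2 hax)] at h
    linarith

theorem UniformContinuousOn.tendsto_dist_comp {α β ι : Type*} [PseudoMetricSpace α]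
    [PseudoMetricSpace β] {f : α → β} {K : Set α} (hf : UniformContinuousOn f K)
    {l : Filter ι} {u v : ι → α} (hu : ∀ i, u i ∈ K) (hv : ∀ i, v i ∈ K)
    (huv : Tendsto (fun i => dist (u i) (v i)) l (𝓝 0)) :
    Tendsto (fun i => dist (f (u i)) (f (v i))) l (𝓝 0) :=
  tendsto_uniformity_iff_dist_tendsto_zero.1 <| Tendsto.comp hf <| tendsto_inf.2
    ⟨(tendsto_uniformity_iff_dist_tendsto_zero (f := fun i => (u i, v i))).2 huv,
      tendsto_principal.2 (.of_forall fun i => ⟨hu i, hv i⟩)⟩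

section AsymptoticPseudoOrbit

variable {α : Type*} [PseudoMetricSpace α] {f : α → α} {K : Set α} {y : ℕ → α}

theorem tendsto_dist_iterate_of_asymptotic_pseudo_orbit (hf : UniformContinuousOn f K)
    (hfK : MapsTo f K K) (hyK : ∀ t, y t ∈ K)
    (hy : Tendsto (fun t => dist (y (t + 1)) (f (y t))) atTop (𝓝 0)) (n : ℕ) :
    Tendsto (fun t => dist (y (t + n)) (f^[n] (y t))) atTop (𝓝 0) := by
  induction n with
  | zero => simp
  | succ n ih =>
    have hsum := (hy.comp (tendsto_add_atTop_nat n)).add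
      (hf.tendsto_dist_comp (fun t => hyK (t + n)) (fun t => hfK.iterate n (hyK t)) ih)
    rw [add_zero] at hsum
    refine squeeze_zero (fun t => dist_nonneg) (fun t => ?_) hsum
    rw [Function.iterate_succ_apply']
    exact dist_triangle _ (f (y (t + n))) _

theorem tendsto_of_frequently_mem_closedBall {p : α} {k δ : ℝ} (hk₀ : 0 ≤ k) (hk₁ : k < 1)
    (hδ : 0 < δ) (hcontr : ∀ x ∈ closedBall p δ, dist (f x) p ≤ k * dist x p)
    (hy : Tendsto (fun t => dist (y (t + 1)) (f (y t))) atTop (𝓝 0))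
    (hfreq : ∃ᶠ t in atTop, y t ∈ closedBall p δ) : Tendsto y atTop (𝓝 p) := by
  have hstep : ∀ t, y t ∈ closedBall p δ →
      dist (y (t + 1)) p ≤ k * dist (y t) p + dist (y (t + 1)) (f (y t)) := fun t ht =>
    (dist_triangle _ (f (y t)) p).trans (by linarith [hcontr _ ht])
  obtain ⟨t₁, ht₁⟩ := eventually_atTop.1 ((tendsto_order.1 hy).2 ((1 - k) * δ) (by nlinarith))
  obtain ⟨t₀, ht₀, hyt₀⟩ := frequently_atTop.1 hfreq t₁
  -- once the defect is below `(1 - k) δ`, the contraction keeps the orbit in the ball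
  have hstay : ∀ m, y (m + t₀) ∈ closedBall p δ := by
    intro m
    induction m with
    | zero => simpa using hyt₀
    | succ m ih =>
      rw [mem_closedBall, Nat.add_right_comm]
      have := ht₁ (m + t₀) (by omega)
      nlinarith [hstep _ ih, mem_closedBall.1 ih]
  refine (tendsto_add_atTop_iff_nat t₀).1 (tendsto_iff_dist_tendsto_zero.2 ?_)
  refine tendsto_zero_of_le_mul_add hk₀ hk₁ (fun _ => dist_nonneg) (fun m => ?_)
    (hy.comp (tendsto_add_atTop_nat t₀))
  rw [Nat.add_right_comm]
  exact hstep _ (hstay m)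

theorem tendsto_of_asymptotic_pseudo_orbit {p : α} (hK : IsCompact K) (hf : ContinuousOn f K)
    (hfK : MapsTo f K K) (horbit : ∀ x ∈ K, Tendsto (fun n => f^[n] x) atTop (𝓝 p))
    {k δ : ℝ} (hk₀ : 0 ≤ k) (hk₁ : k < 1) (hδ : 0 < δ)
    (hcontr : ∀ x ∈ closedBall p δ, dist (f x) p ≤ k * dist x p)
    (hyK : ∀ t, y t ∈ K) (hy : Tendsto (fun t => dist (y (t + 1)) (f (y t))) atTop (𝓝 0)) :
    Tendsto y atTop (𝓝 p) := by
  refine tendsto_of_frequently_mem_closedBall hk₀ hk₁ hδ hcontr hy ?_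
  obtain ⟨a, haK, φ, hφ, hya⟩ := hK.tendsto_subseq hyK
  obtain ⟨n, hn⟩ := ((horbit a haK).eventually (ball_mem_nhds p hδ)).exists
  -- along the subsequence, `y (φ m + n)` shadows `f^[n] a`, which lies in the ball
  have hshadow : Tendsto (fun m => y (φ m + n)) atTop (𝓝 (f^[n] a)) :=
    (tendsto_iff_of_dist ((tendsto_dist_iterate_of_asymptotic_pseudo_orbit
      (hK.uniformContinuousOn_of_continuous hf) hfK hyK hy n).comp hφ.tendsto_atTop)).2
      (((hf.iterate hfK n) a haK).tendsto.comp
        (tendsto_nhdsWithin_iff.2 ⟨hya, .of_forall fun m => hyK (φ m)⟩))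
  exact ((tendsto_add_atTop_nat n).comp hφ.tendsto_atTop).frequently
    ((hshadow.eventually (isOpen_ball.mem_nhds hn)).mono
      fun m hm => ball_subset_closedBall hm).frequently

end AsymptoticPseudoOrbit

theorem HasDerivAt.exists_dist_le_mul_of_abs_lt_one {f : ℝ → ℝ} {f' p : ℝ}
    (hf : HasDerivAt f f' p) (hfp : f p = p) (hf' : |f'| < 1) :
    ∃ k δ : ℝ, 0 ≤ k ∧ k < 1 ∧ 0 < δ ∧ ∀ x ∈ closedBall p δ, dist (f x) p ≤ k * dist x p := by
  obtain ⟨δ, hδ, hsmall⟩ := nhds_basis_closedBall.eventually_iff.1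
    ((hasDerivAt_iff_isLittleO.1 hf).def (c := (1 - |f'|) / 2) (by linarith))
  refine ⟨(1 + |f'|) / 2, δ, by positivity, by linarith, hδ, fun x hx => ?_⟩
  have h := hsmall hx
  rw [Real.norm_eq_abs, Real.norm_eq_abs, smul_eq_mul, hfp] at h
  have h' := abs_sub_abs_le_abs_sub (f x - p) ((x - p) * f')
  rw [abs_mul] at h'
  rw [Real.dist_eq, Real.dist_eq]
  nlinarith [abs_nonneg (x - p)]

theorem tendsto_fixedPoint_of_asymptotic_pseudo_orbit {B : ℝ → ℝ} {σ Bhat p B' b C : ℝ}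
    (hσ : σ ∈ Ico 0 1) (hBc : ContinuousOn B (Ici 0)) (hBpos : ∀ x ∈ Ici 0, 0 < B x)
    (hBbd : ∀ x ∈ Ici 0, B x ≤ Bhat) (hfix : B p + σ * p = p) (hB' : HasDerivAt B B' p)
    (hhyp : |B' + σ| < 1)
    (hGAS : ∀ x, 0 < x → Tendsto (fun t => (fun s => B s + σ * s)^[t] x) atTop (𝓝 p))
    {y : ℕ → ℝ} (hb : 0 < b) (hy : ∀ t, y (t + 1) ∈ Icc b C)
    (hdefect : Tendsto (fun t => dist (y (t + 1)) (B (y t) + σ * y t)) atTop (𝓝 0)) :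
    Tendsto y atTop (𝓝 p) := by
  obtain ⟨hσ₀, hσ₁⟩ := hσ
  set C' := max C (Bhat / (1 - σ))
  obtain ⟨b', hb', hBb'⟩ := isCompact_Icc.exists_forall_le' (hBc.mono fun x hx => hx.1)
    fun x (hx : x ∈ Icc 0 C') => hBpos x hx.1
  have hK : ∀ x ∈ Icc (min b b') C', 0 ≤ x := fun x hx => (lt_min hb hb').le.trans hx.1
  have hBhat : Bhat + σ * C' ≤ C' := by
    have := (div_le_iff₀ (sub_pos.2 hσ₁)).1 (le_max_right C (Bhat / (1 - σ)))
    linarith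
  have hmaps : MapsTo (fun s => B s + σ * s) (Icc (min b b') C') (Icc (min b b') C') :=
    fun x hx => ⟨(min_le_right b b').trans (by nlinarith [hBb' x ⟨hK x hx, hx.2⟩, hK x hx]),
      by nlinarith [hBbd x (hK x hx), hx.2]⟩
  obtain ⟨k, δ, hk₀, hk₁, hδ, hcontr⟩ :=
    (hB'.add ((hasDerivAt_id p).const_mul σ)).exists_dist_le_mul_of_abs_lt_one hfix
      (by simpa using hhyp)
  refine (tendsto_add_atTop_iff_nat 1).1 (tendsto_of_asymptotic_pseudo_orbit isCompact_Icc
    ((hBc.mono fun x hx => hK x hx).add (continuousOn_const.mul continuousOn_id)) hmaps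
    (fun x hx => hGAS x ((lt_min hb hb').trans_le hx.1)) hk₀ hk₁ hδ hcontr
    (fun t => ⟨(min_le_left b b').trans (hy t).1, (hy t).2.trans (le_max_left _ _)⟩)
    (hdefect.comp (tendsto_add_atTop_nat 1)))

structure IsSEIRSSolution (σS σE σI σR γE γI γR : ℝ) (Φ B : ℝ → ℝ) (S E I R N : ℕ → ℝ) :
    Prop where
  total : ∀ t, N t = S t + E t + I t + R t
  susceptible : ∀ t, S (t + 1) = B (N t) + σS * γR * R t + σS * (1 - Φ (I t / N t)) * S t
  exposed : ∀ t, E (t + 1) = σE * Φ (I t / N t) * S t + σE * (1 - γE) * E t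
  infectious : ∀ t, I (t + 1) = σI * γE * E t + σI * (1 - γI) * I t
  recovered : ∀ t, R (t + 1) = σR * γI * I t + σR * (1 - γR) * R t

namespace IsSEIRSSolution

variable {σS σE σI σR γE γI γR : ℝ} {Φ B : ℝ → ℝ} {S E I R N : ℕ → ℝ} {t : ℕ}

theorem ratio_mem_Icc (h : IsSEIRSSolution σS σE σI σR γE γI γR Φ B S E I R N)
    (ht : 0 < S t ∧ 0 ≤ E t ∧ 0 ≤ I t ∧ 0 ≤ R t) : I t / N t ∈ Icc 0 1 := by
  obtain ⟨hS, hE, hI, hR⟩ := ht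
  rw [h.total t]
  exact ⟨by positivity, div_le_one_of_le₀ (by linarith) (by positivity)⟩

theorem susceptible_le_total (h : IsSEIRSSolution σS σE σI σR γE γI γR Φ B S E I R N)
    (ht : 0 < S t ∧ 0 ≤ E t ∧ 0 ≤ I t ∧ 0 ≤ R t) : S t ≤ N t := by
  obtain ⟨-, hE, hI, hR⟩ := ht
  rw [h.total t]
  linarith

theorem recruitment_le_susceptible_succ
    (h : IsSEIRSSolution σS σE σI σR γE γI γR Φ B S E I R N) (hσS : 0 ≤ σS) (hγR : 0 ≤ γR)
    (hΦ : ∀ x ∈ Icc (0 : ℝ) 1, Φ x ∈ Icc (0 : ℝ) 1)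
    (ht : 0 < S t ∧ 0 ≤ E t ∧ 0 ≤ I t ∧ 0 ≤ R t) : B (N t) ≤ S (t + 1) := by
  have hΦt := hΦ _ (h.ratio_mem_Icc ht)
  have := mul_nonneg (mul_nonneg hσS hγR) ht.2.2.2
  have := mul_nonneg (mul_nonneg hσS (sub_nonneg.2 hΦt.2)) ht.1.le
  rw [h.susceptible]
  linarith

theorem nonneg (h : IsSEIRSSolution σS σE σI σR γE γI γR Φ B S E I R N)
    (hσS : 0 ≤ σS) (hσE : 0 ≤ σE) (hσI : 0 ≤ σI) (hσR : 0 ≤ σR)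
    (hγE : γE ∈ Icc 0 1) (hγI : γI ∈ Icc 0 1) (hγR : γR ∈ Icc 0 1)
    (hΦ : ∀ x ∈ Icc (0 : ℝ) 1, Φ x ∈ Icc (0 : ℝ) 1) (hB : ∀ x ∈ Ici (0 : ℝ), 0 < B x)
    (h₀ : 0 < S 0 ∧ 0 ≤ E 0 ∧ 0 ≤ I 0 ∧ 0 ≤ R 0) :
    ∀ t, 0 < S t ∧ 0 ≤ E t ∧ 0 ≤ I t ∧ 0 ≤ R t := by
  intro t
  induction t with
  | zero => exact h₀
  | succ t ih =>
    have hΦt := hΦ _ (h.ratio_mem_Icc ih)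
    have hSN := h.susceptible_le_total ih
    have hBS := h.recruitment_le_susceptible_succ hσS hγR.1 hΦ ih
    obtain ⟨hS, hE, hI, hR⟩ := ih
    refine ⟨(hB (N t) (hS.le.trans hSN)).trans_le hBS, ?_, ?_, ?_⟩
    · rw [h.exposed]
      have := mul_nonneg (mul_nonneg hσE hΦt.1) hS.le
      have := mul_nonneg (mul_nonneg hσE (sub_nonneg.2 hγE.2)) hE
      linarith
    · rw [h.infectious]
      have := mul_nonneg (mul_nonneg hσI hγE.1) hE
      have := mul_nonneg (mul_nonneg hσI (sub_nonneg.2 hγI.2)) hI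
      linarith
    · rw [h.recovered]
      have := mul_nonneg (mul_nonneg hσR hγI.1) hI
      have := mul_nonneg (mul_nonneg hσR (sub_nonneg.2 hγR.2)) hR
      linarith

theorem total_succ_le (h : IsSEIRSSolution σS σE σI σR γE γI γR Φ B S E I R N) {σ Bhat : ℝ}
    (hσS : σS ≤ σ) (hσE : σE ≤ σ) (hσI : σI ≤ σ) (hσR : σR ≤ σ)
    (hγE : γE ∈ Icc 0 1) (hγI : γI ∈ Icc 0 1) (hγR : γR ∈ Icc 0 1)
    (hΦ : ∀ x ∈ Icc (0 : ℝ) 1, Φ x ∈ Icc (0 : ℝ) 1) (hB : ∀ x ∈ Ici (0 : ℝ), B x ≤ Bhat)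
    (ht : 0 < S t ∧ 0 ≤ E t ∧ 0 ≤ I t ∧ 0 ≤ R t) : N (t + 1) ≤ Bhat + σ * N t := by
  have hΦt := hΦ _ (h.ratio_mem_Icc ht)
  obtain ⟨hS, hE, hI, hR⟩ := ht
  have hBt := hB (N t) (by rw [mem_Ici, h.total t]; linarith)
  have hσN : σ * N t = σ * S t + σ * E t + σ * I t + σ * R t := by rw [h.total t]; ring
  rw [h.total (t + 1), h.susceptible, h.exposed, h.infectious, h.recovered]
  -- each compartment passes on a convex combination of survival rates, all at most `σ`
  have := mul_nonneg (mul_nonneg (sub_nonneg.2 hσS) (sub_nonneg.2 hΦt.2)) hS.le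
  have := mul_nonneg (mul_nonneg (sub_nonneg.2 hσE) hΦt.1) hS.le
  have := mul_nonneg (mul_nonneg (sub_nonneg.2 hσE) (sub_nonneg.2 hγE.2)) hE
  have := mul_nonneg (mul_nonneg (sub_nonneg.2 hσI) hγE.1) hE
  have := mul_nonneg (mul_nonneg (sub_nonneg.2 hσI) (sub_nonneg.2 hγI.2)) hI
  have := mul_nonneg (mul_nonneg (sub_nonneg.2 hσR) hγI.1) hI
  have := mul_nonneg (mul_nonneg (sub_nonneg.2 hσR) (sub_nonneg.2 hγR.2)) hR
  have := mul_nonneg (mul_nonneg (sub_nonneg.2 hσS) hγR.1) hR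
  linarith

theorem exists_total_le (h : IsSEIRSSolution σS σE σI σR γE γI γR Φ B S E I R N) {Bhat : ℝ}
    (hσS : σS ∈ Ico 0 1) (hσE : σE < 1) (hσI : σI < 1) (hσR : σR < 1)
    (hγE : γE ∈ Icc 0 1) (hγI : γI ∈ Icc 0 1) (hγR : γR ∈ Icc 0 1)
    (hΦ : ∀ x ∈ Icc (0 : ℝ) 1, Φ x ∈ Icc (0 : ℝ) 1) (hB : ∀ x ∈ Ici (0 : ℝ), B x ≤ Bhat)
    (hpos : ∀ t, 0 < S t ∧ 0 ≤ E t ∧ 0 ≤ I t ∧ 0 ≤ R t) : ∃ C, ∀ t, N t ≤ C :=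
  ⟨_, le_max_div_of_le_add_mul (hσS.1.trans (by simp)) (by simp [hσS.2, hσE, hσI, hσR])
    fun t => h.total_succ_le (σ := max (max σS σE) (max σI σR)) (by simp) (by simp) (by simp)
      (by simp) hγE hγI hγR hΦ hB (hpos t)⟩

theorem exists_pos_susceptible_succ_mem_Icc
    (h : IsSEIRSSolution σS σE σI σR γE γI γR Φ B S E I R N) {C : ℝ} (hσS : 0 ≤ σS)
    (hγR : 0 ≤ γR) (hΦ : ∀ x ∈ Icc (0 : ℝ) 1, Φ x ∈ Icc (0 : ℝ) 1)
    (hBc : ContinuousOn B (Ici 0)) (hBpos : ∀ x ∈ Ici (0 : ℝ), 0 < B x)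
    (hpos : ∀ t, 0 < S t ∧ 0 ≤ E t ∧ 0 ≤ I t ∧ 0 ≤ R t) (hNC : ∀ t, N t ≤ C) :
    ∃ b > 0, ∀ t, S (t + 1) ∈ Icc b C := by
  obtain ⟨b, hb, hBb⟩ := isCompact_Icc.exists_forall_le' (hBc.mono fun x hx => hx.1)
    fun x (hx : x ∈ Icc 0 C) => hBpos x hx.1
  have hSN t := h.susceptible_le_total (hpos t)
  exact ⟨b, hb, fun t => ⟨(hBb _ ⟨(hpos t).1.le.trans (hSN t), hNC t⟩).trans
    (h.recruitment_le_susceptible_succ hσS hγR hΦ (hpos t)), (hSN (t + 1)).trans (hNC (t + 1))⟩⟩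

theorem incidence_le (h : IsSEIRSSolution σS σE σI σR γE γI γR Φ B S E I R N) {β : ℝ}
    (hΦ : ∀ x ∈ Icc (0 : ℝ) 1, Φ x ≤ β * x) (hβ : 0 ≤ β)
    (ht : 0 < S t ∧ 0 ≤ E t ∧ 0 ≤ I t ∧ 0 ≤ R t) : Φ (I t / N t) * S t ≤ β * I t := by
  have hSN := h.susceptible_le_total ht
  calc Φ (I t / N t) * S t ≤ β * (I t / N t) * S t :=
        mul_le_mul_of_nonneg_right (hΦ _ (h.ratio_mem_Icc ht)) ht.1.le
    _ = β * I t * (S t / N t) := by ring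
    _ ≤ β * I t * 1 := by
        have := ht.2.2.1
        gcongr
        exact div_le_one_of_le₀ hSN (ht.1.le.trans hSN)
    _ = β * I t := mul_one _

theorem susceptible_defect_tendsto (h : IsSEIRSSolution σS σE σI σR γE γI γR Φ B S E I R N)
    {β C : ℝ} (hσS : 0 ≤ σS) (hγR : 0 ≤ γR) (hΦ : ∀ x ∈ Icc (0 : ℝ) 1, Φ x ∈ Icc (0 : ℝ) 1)
    (hBc : ContinuousOn B (Ici 0)) (hpos : ∀ t, 0 < S t ∧ 0 ≤ E t ∧ 0 ≤ I t ∧ 0 ≤ R t)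
    (hNC : ∀ t, N t ≤ C) (hinc : ∀ t, Φ (I t / N t) * S t ≤ β * I t)
    (hE : Tendsto E atTop (𝓝 0)) (hI : Tendsto I atTop (𝓝 0)) (hR : Tendsto R atTop (𝓝 0)) :
    Tendsto (fun t => dist (S (t + 1)) (B (S t) + σS * S t)) atTop (𝓝 0) := by
  have hSN := fun t => h.susceptible_le_total (hpos t)
  have hNS : Tendsto (fun t => dist (N t) (S t)) atTop (𝓝 0) := by
    have hsum := (hE.add hI).add hR
    rw [add_zero, add_zero] at hsum
    refine hsum.congr fun t => ?_
    rw [Real.dist_eq, abs_of_nonneg (sub_nonneg.2 (hSN t)), h.total t]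
    ring
  have hBNS := (isCompact_Icc.uniformContinuousOn_of_continuous
    (hBc.mono fun x hx => hx.1)).tendsto_dist_comp
    (fun t => ⟨(hpos t).1.le.trans (hSN t), hNC t⟩)
    (fun t => ⟨(hpos t).1.le, (hSN t).trans (hNC t)⟩) hNS
  have hlim := hBNS.add ((hR.const_mul (σS * γR)).add (hI.const_mul (σS * β)))
  rw [mul_zero, mul_zero, add_zero, add_zero] at hlim
  refine squeeze_zero (fun t => dist_nonneg) (fun t => ?_) hlim
  have hΦS := mul_nonneg hσS (mul_nonneg (hΦ _ (h.ratio_mem_Icc (hpos t))).1 (hpos t).1.le)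
  have hinc' := mul_le_mul_of_nonneg_left (hinc t) hσS
  have hRt := mul_nonneg (mul_nonneg hσS hγR) (hpos t).2.2.2
  have hBt := abs_le.1 (le_refl |B (N t) - B (S t)|)
  rw [Real.dist_eq, Real.dist_eq, h.susceptible, abs_le]
  constructor <;> linarith

theorem exposed_infectious_tendsto_zero
    (h : IsSEIRSSolution σS σE σI σR γE γI γR Φ B S E I R N) {β : ℝ}
    (hσE : σE ∈ Ico 0 1) (hσI : σI ∈ Ioo 0 1) (hγE : 0 < γE) (hγI : 0 ≤ γI)
    (hR₀ : σE * σI * γE * β / ((1 - σE * (1 - γE)) * (1 - σI * (1 - γI))) < 1)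
    (hpos : ∀ t, 0 < S t ∧ 0 ≤ E t ∧ 0 ≤ I t ∧ 0 ≤ R t)
    (hinc : ∀ t, Φ (I t / N t) * S t ≤ β * I t) :
    Tendsto E atTop (𝓝 0) ∧ Tendsto I atTop (𝓝 0) := by
  have ha : σE * (1 - γE) < 1 := by nlinarith [hσE.1, hσE.2]
  have hd : σI * (1 - γI) < 1 := by nlinarith [hσI.1, hσI.2]
  rw [div_lt_one (mul_pos (sub_pos.2 ha) (sub_pos.2 hd))] at hR₀
  refine tendsto_zero_of_le_linear_pair ha hd (mul_pos hσI.1 hγE) (b := σE * β)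
    (by linarith) (fun t => (hpos t).2.1) (fun t => (hpos t).2.2.1) (fun t => ?_)
    (fun t => (h.infectious t).le)
  rw [h.exposed]
  nlinarith [mul_le_mul_of_nonneg_left (hinc t) hσE.1]

theorem recovered_tendsto_zero (h : IsSEIRSSolution σS σE σI σR γE γI γR Φ B S E I R N)
    (hσR : σR ∈ Ico 0 1) (hγR : γR ∈ Icc 0 1) (hpos : ∀ t, 0 < S t ∧ 0 ≤ E t ∧ 0 ≤ I t ∧ 0 ≤ R t)
    (hI : Tendsto I atTop (𝓝 0)) : Tendsto R atTop (𝓝 0) :=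
  tendsto_zero_of_le_mul_add (mul_nonneg hσR.1 (sub_nonneg.2 hγR.2))
    (by nlinarith [hσR.1, hσR.2, hγR.1]) (fun t => (hpos t).2.2.2)
    (fun t => (h.recovered t).trans_le (add_comm _ _).le) (by simpa using hI.const_mul (σR * γI))

end IsSEIRSSolution

theorem seirs_DFE_globally_attracting_general
    (σS σE σI σR γE γI γR : ℝ)
    (hσS : σS ∈ Set.Ioo (0:ℝ) 1) (hσE : σE ∈ Set.Ioo (0:ℝ) 1)
    (hσI : σI ∈ Set.Ioo (0:ℝ) 1) (hσR : σR ∈ Set.Ioo (0:ℝ) 1)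
    (hγE : γE ∈ Set.Ioo (0:ℝ) 1) (hγI : γI ∈ Set.Ioo (0:ℝ) 1)
    (hγR : γR ∈ Set.Ioo (0:ℝ) 1)
    (Φ : ℝ → ℝ)
    (hΦmap : ∀ x ∈ Set.Icc (0:ℝ) 1, Φ x ∈ Set.Icc (0:ℝ) 1)
    (hΦ0 : Φ 0 = 0)
    (hΦC2 : ContDiffOn ℝ 2 Φ (Set.Icc (0:ℝ) 1))
    (hΦconc : ∀ x ∈ Set.Ioo (0:ℝ) 1, iteratedDerivWithin 2 Φ (Set.Icc (0:ℝ) 1) x ≤ 0)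
    (B : ℝ → ℝ)
    (hBC1 : ContDiffOn ℝ 1 B (Set.Ici (0:ℝ)))
    (hBpos : ∀ x ∈ Set.Ici (0:ℝ), 0 < B x)
    (Bhat : ℝ) (hBbd : ∀ x ∈ Set.Ici (0:ℝ), B x ≤ Bhat)
    -- Hypothesis 2.1 for the scalar map Σ(S) = B(S) + σS·S :
    (Sstar : ℝ)
    (hfix : B Sstar + σS * Sstar = Sstar)
    (B' : ℝ) (hB' : HasDerivAt B B' Sstar) (hhyperbolic : |B' + σS| < 1)
    (hscalarGAS : ∀ S0, 0 < S0 →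
      Filter.Tendsto (fun t => (fun s => B s + σS * s)^[t] S0) Filter.atTop (nhds Sstar))
    -- R₀ < 1, with Φ'(0) the derivative of Φ at 0 within [0,1] :
    (hR0 : σE * σI * γE * derivWithin Φ (Set.Icc (0:ℝ) 1) 0 /
        ((1 - σE * (1 - γE)) * (1 - σI * (1 - γI))) < 1)
    -- a solution of system (4) starting in Ω :
    (S E I R N : ℕ → ℝ)
    (hNdef : ∀ t, N t = S t + E t + I t + R t)
    (hS0 : 0 < S 0) (hE0 : 0 ≤ E 0) (hI0 : 0 ≤ I 0) (hR0' : 0 ≤ R 0)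
    (hdynS : ∀ t, S (t+1) = B (N t) + σS * γR * R t
              + σS * (1 - Φ (I t / N t)) * S t)
    (hdynE : ∀ t, E (t+1) = σE * Φ (I t / N t) * S t + σE * (1 - γE) * E t)
    (hdynI : ∀ t, I (t+1) = σI * γE * E t + σI * (1 - γI) * I t)
    (hdynR : ∀ t, R (t+1) = σR * γI * I t + σR * (1 - γR) * R t) :
    Filter.Tendsto S Filter.atTop (nhds Sstar) ∧
    Filter.Tendsto E Filter.atTop (nhds 0) ∧
    Filter.Tendsto I Filter.atTop (nhds 0) ∧
    Filter.Tendsto R Filter.atTop (nhds 0) := by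
  have hsol : IsSEIRSSolution σS σE σI σR γE γI γR Φ B S E I R N :=
    ⟨hNdef, hdynS, hdynE, hdynI, hdynR⟩
  have h0 : (0 : ℝ) ∈ Icc 0 1 := left_mem_Icc.2 zero_le_one
  have hΦle : ∀ x ∈ Icc (0 : ℝ) 1, Φ x ≤ derivWithin Φ (Icc 0 1) 0 * x := fun x hx => by
    simpa [hΦ0] using (concaveOn_Icc_of_iteratedDerivWithin_two_nonpos one_pos hΦC2
      hΦconc).le_add_derivWithin_mul h0 hx hx.1
      (hΦC2.differentiableOn (by norm_num) 0 h0)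
  have hβ : 0 ≤ derivWithin Φ (Icc 0 1) 0 := by
    simpa using (hΦmap 1 (right_mem_Icc.2 zero_le_one)).1.trans
      (hΦle 1 (right_mem_Icc.2 zero_le_one))
  have hpos := hsol.nonneg hσS.1.le hσE.1.le hσI.1.le hσR.1.le (Ioo_subset_Icc_self hγE)
    (Ioo_subset_Icc_self hγI) (Ioo_subset_Icc_self hγR) hΦmap hBpos ⟨hS0, hE0, hI0, hR0'⟩
  have hinc t := hsol.incidence_le hΦle hβ (hpos t)
  obtain ⟨C, hNC⟩ := hsol.exists_total_le ⟨hσS.1.le, hσS.2⟩ hσE.2 hσI.2 hσR.2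
    (Ioo_subset_Icc_self hγE) (Ioo_subset_Icc_self hγI) (Ioo_subset_Icc_self hγR) hΦmap hBbd hpos
  obtain ⟨hE, hI⟩ := hsol.exposed_infectious_tendsto_zero ⟨hσE.1.le, hσE.2⟩ hσI hγE.1 hγI.1.le hR0
    hpos hinc
  have hR := hsol.recovered_tendsto_zero ⟨hσR.1.le, hσR.2⟩ (Ioo_subset_Icc_self hγR) hpos hI
  obtain ⟨b, hb, hSb⟩ := hsol.exists_pos_susceptible_succ_mem_Icc hσS.1.le hγR.1.le hΦmap
    hBC1.continuousOn hBpos hpos hNC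
  exact ⟨tendsto_fixedPoint_of_asymptotic_pseudo_orbit ⟨hσS.1.le, hσS.2⟩ hBC1.continuousOn hBpos
    hBbd hfix hB' hhyperbolic hscalarGAS hb hSb (hsol.susceptible_defect_tendsto hσS.1.le hγR.1.le
      hΦmap hBC1.continuousOn hpos hNC hinc hE hI hR), hE, hI, hR⟩

/-- Theorem 3(b): if `R₀ < 1` and `Φ'' ≤ 0` on `(0,1)`, under
Hypothesis 2.1 the disease-free equilibrium `(S*,0,0,0)` of system (4) attracts
every solution starting in `Ω = {S > 0} ∩ ℝ⁴₊`. -/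
theorem seirs_DFE_globally_attracting
    (σS σE σI σR γE γI γR : ℝ)
    (hσS : σS ∈ Set.Ioo (0:ℝ) 1) (hσE : σE ∈ Set.Ioo (0:ℝ) 1)
    (hσI : σI ∈ Set.Ioo (0:ℝ) 1) (hσR : σR ∈ Set.Ioo (0:ℝ) 1)
    (hγE : γE ∈ Set.Ioo (0:ℝ) 1) (hγI : γI ∈ Set.Ioo (0:ℝ) 1)
    (hγR : γR ∈ Set.Ioo (0:ℝ) 1)
    (Φ : ℝ → ℝ)
    (hΦmap : ∀ x ∈ Set.Icc (0:ℝ) 1, Φ x ∈ Set.Icc (0:ℝ) 1)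
    (hΦ0 : Φ 0 = 0)
    (hΦmono : StrictMonoOn Φ (Set.Icc (0:ℝ) 1))
    (hΦC2 : ContDiffOn ℝ 2 Φ (Set.Icc (0:ℝ) 1))
    (hΦconc : ∀ x ∈ Set.Ioo (0:ℝ) 1, iteratedDerivWithin 2 Φ (Set.Icc (0:ℝ) 1) x ≤ 0)
    (B : ℝ → ℝ)
    (hBC1 : ContDiffOn ℝ 1 B (Set.Ici (0:ℝ)))
    (hBpos : ∀ x ∈ Set.Ici (0:ℝ), 0 < B x)
    (Bhat : ℝ) (hBbd : ∀ x ∈ Set.Ici (0:ℝ), B x ≤ Bhat)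
    -- Hypothesis 2.1 for the scalar map Σ(S) = B(S) + σS·S :
    (Sstar : ℝ) (hSstar_pos : 0 < Sstar)
    (hfix : B Sstar + σS * Sstar = Sstar)
    (huniq : ∀ x, 0 < x → B x + σS * x = x → x = Sstar)
    (B' : ℝ) (hB' : HasDerivAt B B' Sstar) (hhyperbolic : |B' + σS| < 1)
    (hscalarGAS : ∀ S0, 0 < S0 →
      Filter.Tendsto (fun t => (fun s => B s + σS * s)^[t] S0) Filter.atTop (nhds Sstar))
    -- R₀ < 1, with Φ'(0) the derivative of Φ at 0 within [0,1] :
    (hR0 : σE * σI * γE * derivWithin Φ (Set.Icc (0:ℝ) 1) 0 /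
        ((1 - σE * (1 - γE)) * (1 - σI * (1 - γI))) < 1)
    -- a solution of system (4) starting in Ω :
    (S E I R N : ℕ → ℝ)
    (hNdef : ∀ t, N t = S t + E t + I t + R t)
    (hS0 : 0 < S 0) (hE0 : 0 ≤ E 0) (hI0 : 0 ≤ I 0) (hR0' : 0 ≤ R 0)
    (hdynS : ∀ t, S (t+1) = B (N t) + σS * γR * R t
              + σS * (1 - Φ (I t / N t)) * S t)
    (hdynE : ∀ t, E (t+1) = σE * Φ (I t / N t) * S t + σE * (1 - γE) * E t)
    (hdynI : ∀ t, I (t+1) = σI * γE * E t + σI * (1 - γI) * I t)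
    (hdynR : ∀ t, R (t+1) = σR * γI * I t + σR * (1 - γR) * R t) :
    Filter.Tendsto S Filter.atTop (nhds Sstar) ∧
    Filter.Tendsto E Filter.atTop (nhds 0) ∧
    Filter.Tendsto I Filter.atTop (nhds 0) ∧
    Filter.Tendsto R Filter.atTop (nhds 0) :=
  seirs_DFE_globally_attracting_general σS σE σI σR γE γI γR hσS hσE hσI hσR hγE hγI hγR Φ hΦmap hΦ0
    hΦC2 hΦconc B hBC1 hBpos Bhat hBbd Sstar hfix B' hB' hhyperbolic hscalarGAS hR0 S E I R N hNdef
    hS0 hE0 hI0 hR0' hdynS hdynE hdynI hdynR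
end

section
/- (Theorem 8(a)) If R̄₀ < 1, then the disease-free equilibrium Y₀* = (B̄/(1−δ_S^S), 0, 0, 0) of the reduced system (21) is globally attracting: every solution with Y(0) ∈ ℝ⁴₊ and S(0)+E(0)+I(0)+R(0) > 0 satisfies S(t) → B̄/(1−δ_S^S), E(t) → 0, I(t) → 0 and R(t) → 0 as t → ∞. -/
/-!
The per-patch incidence `β m_I m_S S I / (m · Y)` is bounded both by `m_S S` and by `m_I I`.
Hence the orthant is invariant and the infected pair `(E, I)` is dominated by the nonnegative
linear system with matrix `[[δ_E^E, β̄_I], [δ_E^I, δ_I^I]]`, whose spectral radius is below `1`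
exactly when `R̄₀ < 1`; a weighted sum `p E + I` then decays geometrically. Once `I → 0`,
`R` and `S` are stable scalar linear recurrences whose forcing terms tend to `0` and to `B̄`.
-/

open Finset Filter Topology

theorem tendsto_zero_of_le_mul_add_s13 {u e : ℕ → ℝ} {c : ℝ} (hc0 : 0 ≤ c) (hc1 : c < 1)
    (hu : ∀ t, 0 ≤ u t) (hrec : ∀ t, u (t + 1) ≤ c * u t + e t)
    (he : Tendsto e atTop (𝓝 0)) : Tendsto u atTop (𝓝 0) := by
  refine tendsto_order.2 ⟨fun a ha => .of_forall fun t => ha.trans_le (hu t), fun ε hε => ?_⟩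
  obtain ⟨T, hT⟩ := eventually_atTop.1 <|
    he.eventually (ge_mem_nhds (mul_pos (sub_pos.2 hc1) (half_pos hε)))
  -- once `e ≤ (1 - c) ε / 2`, the excess `u - ε / 2` is contracted by `c`
  have hgeom : ∀ k, u (k + T) - ε / 2 ≤ c ^ k * (u T - ε / 2) := by
    intro k
    induction k with
    | zero => simp
    | succ k ih =>
      calc u (k + 1 + T) - ε / 2 ≤ c * (u (k + T) - ε / 2) := by
            rw [add_right_comm]
            linarith [hrec (k + T), hT (k + T) (Nat.le_add_left T k)]
        _ ≤ c ^ (k + 1) * (u T - ε / 2) := by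
            rw [pow_succ', mul_assoc]
            exact mul_le_mul_of_nonneg_left ih hc0
  have hlim : Tendsto (fun k => c ^ k * (u T - ε / 2)) atTop (𝓝 0) := by
    simpa using (tendsto_pow_atTop_nhds_zero_of_lt_one hc0 hc1).mul_const (u T - ε / 2)
  rw [← map_add_atTop_eq_nat T, eventually_map]
  filter_upwards [hlim.eventually (gt_mem_nhds (half_pos hε))] with k hk
  linarith [hgeom k]

theorem tendsto_of_eq_mul_add {x g : ℕ → ℝ} {c L : ℝ} (hc0 : 0 ≤ c) (hc1 : c < 1)
    (hrec : ∀ t, x (t + 1) = c * x t + g t) (hg : Tendsto g atTop (𝓝 L)) :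
    Tendsto x atTop (𝓝 (L / (1 - c))) := by
  have hfix : c * (L / (1 - c)) + L = L / (1 - c) := by
    field_simp [(sub_pos.2 hc1).ne']
    ring
  rw [tendsto_iff_norm_sub_tendsto_zero] at hg ⊢
  refine tendsto_zero_of_le_mul_add_s13 hc0 hc1 (fun t => norm_nonneg _) (fun t => ?_) hg
  calc ‖x (t + 1) - L / (1 - c)‖ = ‖c * (x t - L / (1 - c)) + (g t - L)‖ := by
        rw [hrec]
        congr 1
        linear_combination hfix
    _ ≤ c * ‖x t - L / (1 - c)‖ + ‖g t - L‖ := by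
        grw [norm_add_le, norm_mul, Real.norm_of_nonneg hc0]

theorem tendsto_zero_of_coupled_le {x y : ℕ → ℝ} {a b c d : ℝ} (ha1 : a < 1)
    (hb : 0 < b) (hc : 0 ≤ c) (hd0 : 0 ≤ d) (hsub : c * b < (1 - a) * (1 - d))
    (hx : ∀ t, 0 ≤ x t) (hy : ∀ t, 0 ≤ y t)
    (hxrec : ∀ t, x (t + 1) ≤ a * x t + b * y t) (hyrec : ∀ t, y (t + 1) ≤ c * x t + d * y t) :
    Tendsto x atTop (𝓝 0) ∧ Tendsto y atTop (𝓝 0) := by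
  have ha : 0 < 1 - a := sub_pos.2 ha1
  -- a weight `p` making `p x + y` a strict Lyapunov function exists exactly when `c b < (1-a)(1-d)`
  obtain ⟨p, hcp, hpb⟩ : ∃ p, c / (1 - a) < p ∧ p < (1 - d) / b := by
    refine exists_between ?_
    rw [div_lt_div_iff₀ ha hb]
    linarith
  have hp : 0 < p := (div_nonneg hc ha.le).trans_lt hcp
  rw [div_lt_iff₀ ha] at hcp
  rw [lt_div_iff₀ hb] at hpb
  set k := max (a + c / p) (d + p * b)
  have hk0 : 0 ≤ k := le_max_of_le_right (by positivity)
  have hk1 : k < 1 := by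
    refine max_lt ?_ (by linarith)
    rw [← lt_sub_iff_add_lt', div_lt_iff₀ hp]
    linarith
  have hV : Tendsto (fun t => p * x t + y t) atTop (𝓝 0) := by
    refine tendsto_zero_of_le_mul_add_s13 (e := 0) hk0 hk1
      (fun t => by have := hx t; have := hy t; positivity) (fun t => ?_) tendsto_const_nhds
    have hpx := mul_le_mul_of_nonneg_left (hxrec t) hp.le
    have hcx : (a + c / p) * (p * x t) = p * (a * x t) + c * x t := by field_simp
    calc p * x (t + 1) + y (t + 1) ≤ (a + c / p) * (p * x t) + (d + p * b) * y t := by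
          rw [hcx]; linarith [hyrec t]
      _ ≤ k * (p * x t + y t) + 0 := by
          rw [add_zero, mul_add]
          exact add_le_add
            (mul_le_mul_of_nonneg_right (le_max_left _ _) (mul_nonneg hp.le (hx t)))
            (mul_le_mul_of_nonneg_right (le_max_right _ _) (hy t))
  refine ⟨squeeze_zero hx (fun t => ?_) (by simpa using hV.div_const p),
    squeeze_zero hy (fun t => ?_) hV⟩
  · rw [le_div_iff₀ hp]
    linarith [hy t]
  · linarith [mul_nonneg hp.le (hx t)]

theorem mul_mem_Ioo_of_mem_Ioc {a b : ℝ} (ha : a ∈ Set.Ioo 0 1) (hb : b ∈ Set.Ioc 0 1) :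
    a * b ∈ Set.Ioo 0 1 :=
  ⟨mul_pos ha.1 hb.1, mul_lt_one_of_nonneg_of_lt_one_left ha.1.le ha.2 hb.2⟩

theorem sum_mul_mem_Ioo_of_sum_eq_one {ι : Type*} [Fintype ι] {f m : ι → ℝ}
    (hf : ∀ j, f j ∈ Set.Ioo 0 1) (hm : ∀ j, 0 < m j) (hm1 : ∑ j, m j = 1) :
    ∑ j, f j * m j ∈ Set.Ioo 0 1 := by
  have hne : (univ : Finset ι).Nonempty := nonempty_of_sum_ne_zero (hm1 ▸ one_ne_zero)
  refine ⟨sum_pos (fun j _ => mul_pos (hf j).1 (hm j)) hne, ?_⟩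
  calc ∑ j, f j * m j < ∑ j, m j :=
        sum_lt_sum_of_nonempty hne fun j _ => mul_lt_of_lt_one_left (hm j) (hf j).2
    _ = 1 := hm1

theorem mul_div_add_le_min {x y u v : ℝ} (hx : 0 ≤ x) (hy : 0 ≤ y) (hu : 0 ≤ u) (hv : 0 ≤ v) :
    x * y / (x + u + y + v) ≤ min x y := by
  have hD : 0 ≤ x + u + y + v := by positivity
  refine le_min (div_le_of_le_mul₀ hD hx ?_) (div_le_of_le_mul₀ hD hy ?_) <;> nlinarith

theorem contact_mem_Icc {a b c d S E I R : ℝ} (hm : 0 ≤ a ∧ 0 ≤ b ∧ 0 ≤ c ∧ 0 ≤ d)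
    (hY : 0 ≤ S ∧ 0 ≤ E ∧ 0 ≤ I ∧ 0 ≤ R) :
    a * S * (c * I) / (a * S + b * E + c * I + d * R) ∈ Set.Icc 0 (min (a * S) (c * I)) := by
  obtain ⟨ha, hb, hc, hd⟩ := hm
  obtain ⟨hS, hE, hI, hR⟩ := hY
  have hx := mul_nonneg ha hS
  have hu := mul_nonneg hb hE
  have hy := mul_nonneg hc hI
  have hv := mul_nonneg hd hR
  exact ⟨div_nonneg (mul_nonneg hx hy) (by positivity), mul_div_add_le_min hx hy hu hv⟩

section Incidence

variable {ι : Type*} [Fintype ι] {σ β mS mE mI mR : ι → ℝ} {S E I R : ℝ}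

/-- The term `β̄_S(Y) S I` (for `σ = σ^S`) or `β̄_E(Y) S I` (for `σ = σ^E`) of system (21). -/
noncomputable def incidence (σ β mS mE mI mR : ι → ℝ) (S E I R : ℝ) : ℝ :=
  (∑ j, σ j * β j * mI j * mS j / (mS j * S + mE j * E + mI j * I + mR j * R)) * S * I

theorem incidence_eq_sum :
    incidence σ β mS mE mI mR S E I R =
      ∑ j, σ j * β j * (mS j * S * (mI j * I) / (mS j * S + mE j * E + mI j * I + mR j * R)) := by
  simp only [incidence, sum_mul]
  exact sum_congr rfl fun j _ => by ring

theorem incidence_nonneg (hm : ∀ j, 0 ≤ mS j ∧ 0 ≤ mE j ∧ 0 ≤ mI j ∧ 0 ≤ mR j)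
    (hY : 0 ≤ S ∧ 0 ≤ E ∧ 0 ≤ I ∧ 0 ≤ R) (hσ : ∀ j, 0 ≤ σ j) (hβ : ∀ j, 0 ≤ β j) :
    0 ≤ incidence σ β mS mE mI mR S E I R := by
  rw [incidence_eq_sum]
  exact sum_nonneg fun j _ =>
    mul_nonneg (mul_nonneg (hσ j) (hβ j)) (contact_mem_Icc (hm j) hY).1

theorem incidence_le_susceptible (hm : ∀ j, 0 ≤ mS j ∧ 0 ≤ mE j ∧ 0 ≤ mI j ∧ 0 ≤ mR j)
    (hY : 0 ≤ S ∧ 0 ≤ E ∧ 0 ≤ I ∧ 0 ≤ R) (hσ : ∀ j, 0 ≤ σ j) (hβ : ∀ j, β j ∈ Set.Icc 0 1) :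
    incidence σ β mS mE mI mR S E I R ≤ (∑ j, σ j * mS j) * S := by
  rw [incidence_eq_sum, sum_mul]
  refine sum_le_sum fun j _ => ?_
  have hσx := mul_nonneg (hσ j) (mul_nonneg (hm j).1 hY.1)
  have hσβ := mul_nonneg (hσ j) (hβ j).1
  grw [(contact_mem_Icc (hm j) hY).2, min_le_left]
  nlinarith [(hβ j).2]

theorem incidence_le_infected (hm : ∀ j, 0 ≤ mS j ∧ 0 ≤ mE j ∧ 0 ≤ mI j ∧ 0 ≤ mR j)
    (hY : 0 ≤ S ∧ 0 ≤ E ∧ 0 ≤ I ∧ 0 ≤ R) (hσ : ∀ j, 0 ≤ σ j) (hβ : ∀ j, 0 ≤ β j) :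
    incidence σ β mS mE mI mR S E I R ≤ (∑ j, σ j * β j * mI j) * I := by
  rw [incidence_eq_sum, sum_mul]
  refine sum_le_sum fun j _ => ?_
  have hσβ := mul_nonneg (hσ j) (hβ j)
  grw [(contact_mem_Icc (hm j) hY).2, min_le_right]
  exact (mul_assoc _ _ _).symm.le

end Incidence

theorem reduced_system_nonneg {S E I R : ℕ → ℝ} {B dRS dSS dEE dEI dII dIR dRR : ℝ}
    {FS FE : ℝ → ℝ → ℝ → ℝ → ℝ} (hB : 0 ≤ B) (hRS : 0 ≤ dRS) (hEE : 0 ≤ dEE) (hEI : 0 ≤ dEI)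
    (hII : 0 ≤ dII) (hIR : 0 ≤ dIR) (hRR : 0 ≤ dRR)
    (hFS : ∀ s e i r, 0 ≤ s ∧ 0 ≤ e ∧ 0 ≤ i ∧ 0 ≤ r → FS s e i r ≤ dSS * s)
    (hFE : ∀ s e i r, 0 ≤ s ∧ 0 ≤ e ∧ 0 ≤ i ∧ 0 ≤ r → 0 ≤ FE s e i r)
    (hS0 : 0 ≤ S 0) (hE0 : 0 ≤ E 0) (hI0 : 0 ≤ I 0) (hR0 : 0 ≤ R 0)
    (hS : ∀ t, S (t + 1) = B + dRS * R t + dSS * S t - FS (S t) (E t) (I t) (R t))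
    (hE : ∀ t, E (t + 1) = FE (S t) (E t) (I t) (R t) + dEE * E t)
    (hI : ∀ t, I (t + 1) = dEI * E t + dII * I t)
    (hR : ∀ t, R (t + 1) = dIR * I t + dRR * R t) (t : ℕ) :
    0 ≤ S t ∧ 0 ≤ E t ∧ 0 ≤ I t ∧ 0 ≤ R t := by
  induction t with
  | zero => exact ⟨hS0, hE0, hI0, hR0⟩
  | succ t ih =>
    have := hFS _ _ _ _ ih
    have := hFE _ _ _ _ ih
    obtain ⟨hs, he, hi, hr⟩ := ih
    rw [hS, hE, hI, hR]
    refine ⟨?_, ?_, ?_, ?_⟩ <;> nlinarith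

open Finset in
theorem reduced_system_DFE_globally_attracting_general
    (n : ℕ)
    (B β σS σE σI σR γE γI γR : Fin n → ℝ)
    (hB : ∀ j, 0 < B j) (hβ : ∀ j, β j ∈ Set.Ioc (0:ℝ) 1)
    (hσS : ∀ j, σS j ∈ Set.Ioo (0:ℝ) 1) (hσE : ∀ j, σE j ∈ Set.Ioo (0:ℝ) 1)
    (hσI : ∀ j, σI j ∈ Set.Ioo (0:ℝ) 1) (hσR : ∀ j, σR j ∈ Set.Ioo (0:ℝ) 1)
    (hγE : ∀ j, γE j ∈ Set.Ioo (0:ℝ) 1) (hγI : ∀ j, γI j ∈ Set.Ioo (0:ℝ) 1)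
    (hγR : ∀ j, γR j ∈ Set.Ioo (0:ℝ) 1)
    (mS mE mI mR : Fin n → ℝ)
    (hmS : ∀ j, 0 < mS j) (hmE : ∀ j, 0 < mE j)
    (hmI : ∀ j, 0 < mI j) (hmR : ∀ j, 0 < mR j)
    (hmS1 : ∑ j, mS j = 1) (hmE1 : ∑ j, mE j = 1)
    (hmI1 : ∑ j, mI j = 1) (hmR1 : ∑ j, mR j = 1)
    -- the basic reproduction number R̄₀ = δ_E^I β̄_I / ((1-δ_E^E)(1-δ_I^I)) < 1 :
    (hR0 : (∑ j, σI j * γE j * mE j) * (∑ j, σE j * β j * mI j) /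
        ((1 - ∑ j, σE j * (1 - γE j) * mE j) * (1 - ∑ j, σI j * (1 - γI j) * mI j))
        < 1)
    -- a solution of the reduced system (21) :
    (S E I R : ℕ → ℝ)
    (hS0 : 0 ≤ S 0) (hE0 : 0 ≤ E 0) (hI0 : 0 ≤ I 0) (hR0' : 0 ≤ R 0)
    (hdynS : ∀ t, S (t+1) = (∑ j, B j) + (∑ j, σS j * γR j * mR j) * R t
        + (∑ j, σS j * mS j) * S t
        - (∑ j, σS j * β j * mI j * mS j /
            (mS j * S t + mE j * E t + mI j * I t + mR j * R t)) * S t * I t)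
    (hdynE : ∀ t, E (t+1) = (∑ j, σE j * β j * mI j * mS j /
            (mS j * S t + mE j * E t + mI j * I t + mR j * R t)) * S t * I t
        + (∑ j, σE j * (1 - γE j) * mE j) * E t)
    (hdynI : ∀ t, I (t+1) = (∑ j, σI j * γE j * mE j) * E t
        + (∑ j, σI j * (1 - γI j) * mI j) * I t)
    (hdynR : ∀ t, R (t+1) = (∑ j, σR j * γI j * mI j) * I t
        + (∑ j, σR j * (1 - γR j) * mR j) * R t) :
    Filter.Tendsto S Filter.atTop
      (nhds ((∑ j, B j) / (1 - ∑ j, σS j * mS j))) ∧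
    Filter.Tendsto E Filter.atTop (nhds 0) ∧
    Filter.Tendsto I Filter.atTop (nhds 0) ∧
    Filter.Tendsto R Filter.atTop (nhds 0) := by
  have hmean := @sum_mul_mem_Ioo_of_sum_eq_one (Fin n) _
  have hprod {a b : Fin n → ℝ} (ha : ∀ j, a j ∈ Set.Ioo 0 1) (hb : ∀ j, b j ∈ Set.Ioo 0 1) :=
    fun j => mul_mem_Ioo_of_mem_Ioc (ha j) (Set.Ioo_subset_Ioc_self (hb j))
  have hsurv {a b : Fin n → ℝ} (ha : ∀ j, a j ∈ Set.Ioo 0 1) (hb : ∀ j, b j ∈ Set.Ioo 0 1) :=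
    hprod ha fun j => Set.Ioo.one_sub_mem (hb j)
  have hSS := hmean hσS hmS hmS1
  have hRS := hmean (hprod hσS hγR) hmR hmR1
  have hEE := hmean (hsurv hσE hγE) hmE hmE1
  have hEI := hmean (hprod hσI hγE) hmE hmE1
  have hII := hmean (hsurv hσI hγI) hmI hmI1
  have hIR := hmean (hprod hσR hγI) hmI hmI1
  have hRR := hmean (hsurv hσR hγR) hmR hmR1
  have hβI := hmean (fun j => mul_mem_Ioo_of_mem_Ioc (hσE j) (hβ j)) hmI hmI1
  have hσS0 j : 0 ≤ σS j := (hσS j).1.le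
  have hσE0 j : 0 ≤ σE j := (hσE j).1.le
  have hβ0 j : 0 ≤ β j := (hβ j).1.le
  have hm j : 0 ≤ mS j ∧ 0 ≤ mE j ∧ 0 ≤ mI j ∧ 0 ≤ mR j :=
    ⟨(hmS j).le, (hmE j).le, (hmI j).le, (hmR j).le⟩
  have hY := reduced_system_nonneg (FS := incidence σS β mS mE mI mR)
    (FE := incidence σE β mS mE mI mR) (sum_nonneg fun j _ => (hB j).le) hRS.1.le hEE.1.le
    hEI.1.le hII.1.le hIR.1.le hRR.1.le
    (fun _ _ _ _ h => incidence_le_susceptible hm h hσS0 fun j => Set.Ioc_subset_Icc_self (hβ j))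
    (fun _ _ _ _ h => incidence_nonneg hm h hσE0 hβ0) hS0 hE0 hI0 hR0' hdynS hdynE hdynI hdynR
  have hinc {σ : Fin n → ℝ} (hσ : ∀ j, 0 ≤ σ j) t := incidence_le_infected hm (hY t) hσ hβ0
  obtain ⟨hElim, hIlim⟩ := tendsto_zero_of_coupled_le hEE.2 hβI.1 hEI.1.le hII.1.le
    ((div_lt_one (mul_pos (sub_pos.2 hEE.2) (sub_pos.2 hII.2))).1 hR0)
    (fun t => (hY t).2.1) (fun t => (hY t).2.2.1)
    (fun t => by rw [hdynE t, add_comm]; exact add_le_add_right (hinc hσE0 t) _)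
    (fun t => (hdynI t).le)
  have hRlim := tendsto_zero_of_le_mul_add_s13 (e := fun t => (∑ j, σR j * γI j * mI j) * I t)
    hRR.1.le hRR.2 (fun t => (hY t).2.2.2) (fun t => by rw [hdynR t, add_comm])
    (by simpa using hIlim.const_mul _)
  have hincS :
      Tendsto (fun t => incidence σS β mS mE mI mR (S t) (E t) (I t) (R t)) atTop (𝓝 0) :=
    squeeze_zero (fun t => incidence_nonneg hm (hY t) hσS0 hβ0) (hinc hσS0)
      (by simpa using hIlim.const_mul _)
  have hdynS' t : S (t + 1) = (∑ j, σS j * mS j) * S t + ((∑ j, B j)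
      + (∑ j, σS j * γR j * mR j) * R t - incidence σS β mS mE mI mR (S t) (E t) (I t) (R t)) := by
    rw [hdynS t, incidence]
    ring
  have hSlim := tendsto_of_eq_mul_add hSS.1.le hSS.2 hdynS'
    (by simpa using (tendsto_const_nhds.add (hRlim.const_mul _)).sub hincS)
  exact ⟨hSlim, hElim, hIlim, hRlim⟩

open Finset in
/-- Theorem 8(a): if `R̄₀ < 1`, the disease-free equilibrium
`Y₀* = (B̄/(1-δ_S^S), 0, 0, 0)` of the reduced system (21) attracts every solution
with nonnegative initial data and positive initial total population. -/
theorem reduced_system_DFE_globally_attracting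
    (n : ℕ) (hn : 0 < n)
    (B β σS σE σI σR γE γI γR : Fin n → ℝ)
    (hB : ∀ j, 0 < B j) (hβ : ∀ j, β j ∈ Set.Ioc (0:ℝ) 1)
    (hσS : ∀ j, σS j ∈ Set.Ioo (0:ℝ) 1) (hσE : ∀ j, σE j ∈ Set.Ioo (0:ℝ) 1)
    (hσI : ∀ j, σI j ∈ Set.Ioo (0:ℝ) 1) (hσR : ∀ j, σR j ∈ Set.Ioo (0:ℝ) 1)
    (hγE : ∀ j, γE j ∈ Set.Ioo (0:ℝ) 1) (hγI : ∀ j, γI j ∈ Set.Ioo (0:ℝ) 1)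
    (hγR : ∀ j, γR j ∈ Set.Ioo (0:ℝ) 1)
    (mS mE mI mR : Fin n → ℝ)
    (hmS : ∀ j, 0 < mS j) (hmE : ∀ j, 0 < mE j)
    (hmI : ∀ j, 0 < mI j) (hmR : ∀ j, 0 < mR j)
    (hmS1 : ∑ j, mS j = 1) (hmE1 : ∑ j, mE j = 1)
    (hmI1 : ∑ j, mI j = 1) (hmR1 : ∑ j, mR j = 1)
    -- the basic reproduction number R̄₀ = δ_E^I β̄_I / ((1-δ_E^E)(1-δ_I^I)) < 1 :
    (hR0 : (∑ j, σI j * γE j * mE j) * (∑ j, σE j * β j * mI j) /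
        ((1 - ∑ j, σE j * (1 - γE j) * mE j) * (1 - ∑ j, σI j * (1 - γI j) * mI j))
        < 1)
    -- a solution of the reduced system (21) :
    (S E I R : ℕ → ℝ)
    (hS0 : 0 ≤ S 0) (hE0 : 0 ≤ E 0) (hI0 : 0 ≤ I 0) (hR0' : 0 ≤ R 0)
    (hN0 : 0 < S 0 + E 0 + I 0 + R 0)
    (hdynS : ∀ t, S (t+1) = (∑ j, B j) + (∑ j, σS j * γR j * mR j) * R t
        + (∑ j, σS j * mS j) * S t
        - (∑ j, σS j * β j * mI j * mS j /
            (mS j * S t + mE j * E t + mI j * I t + mR j * R t)) * S t * I t)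
    (hdynE : ∀ t, E (t+1) = (∑ j, σE j * β j * mI j * mS j /
            (mS j * S t + mE j * E t + mI j * I t + mR j * R t)) * S t * I t
        + (∑ j, σE j * (1 - γE j) * mE j) * E t)
    (hdynI : ∀ t, I (t+1) = (∑ j, σI j * γE j * mE j) * E t
        + (∑ j, σI j * (1 - γI j) * mI j) * I t)
    (hdynR : ∀ t, R (t+1) = (∑ j, σR j * γI j * mI j) * I t
        + (∑ j, σR j * (1 - γR j) * mR j) * R t) :
    Filter.Tendsto S Filter.atTop
      (nhds ((∑ j, B j) / (1 - ∑ j, σS j * mS j))) ∧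
    Filter.Tendsto E Filter.atTop (nhds 0) ∧
    Filter.Tendsto I Filter.atTop (nhds 0) ∧
    Filter.Tendsto R Filter.atTop (nhds 0) :=
  reduced_system_DFE_globally_attracting_general n B β σS σE σI σR γE γI γR hB hβ hσS hσE hσI hσR
    hγE hγI hγR mS mE mI mR hmS hmE hmI hmR hmS1 hmE1 hmI1 hmR1 hR0 S E I R hS0 hE0 hI0 hR0' hdynS
    hdynE hdynI hdynR
end
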